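/- In the Δ-setup, the difference of the training-mismatch trace terms satisfies Tr[Q D Dᴴ Q] − Tr[Q₁ D₁ D₁ᴴ Q₁] = ‖t‖²(‖v‖² − ‖e − u + v‖²). -/

import Mathlib

open Matrix
open scoped ComplexOrder

/-- squared Euclidean norm of a complex vector -/
noncomputable def nsq {n : ℕ} (v : Fin n → ℂ) : ℝ := ∑ i, Complex.normSq (v i)

/-!
Since `Q` is Hermitian positive semidefinite, `α ≥ 0` and `Q₁ = Q - t tᴴ` is the
Sherman–Morrison downdate with `Q₁ x̂ = t / √(1 + α)`. Hence `D₁ᴴ Q₁ = Dᴴ Q + (e - u) tᴴ` is a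
rank-one update of `Dᴴ Q`. Both traces are squared Frobenius norms, `‖Dᴴ Q‖²` and `‖D₁ᴴ Q₁‖²`,
and expanding the square of the rank-one update, using `Dᴴ Q t = ‖t‖² v` (true also for `t = 0`,
where `v = 0⁻¹ • 0 = 0`), gives the identity.
-/

lemma ofReal_nsq {n : ℕ} (x : Fin n → ℂ) : ((nsq x : ℝ) : ℂ) = star x ⬝ᵥ x := by
  simp only [nsq, dotProduct, Pi.star_apply, Complex.ofReal_sum, Complex.normSq_eq_conj_mul_self]
  rfl

section RankOne

variable {R m n : Type*} [CommRing R] [StarRing R] [Fintype m]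

lemma conjTranspose_add_vecMulVec_mul {Q : Matrix m m R} (hQ : Q.IsHermitian)
    (D : Matrix m n R) (x : m → R) (y : n → R) :
    (D + vecMulVec x (star y))ᴴ * Q = Dᴴ * Q + vecMulVec y (star (Q *ᵥ x)) := by
  rw [conjTranspose_add, conjTranspose_vecMulVec, star_star, Matrix.add_mul, vecMulVec_mul,
    star_mulVec, hQ.eq]

variable [Fintype n]

lemma mul_mul_conjTranspose_mul_of_isHermitian {Q : Matrix n n R} (hQ : Q.IsHermitian)
    (D : Matrix n m R) : Q * D * Dᴴ * Q = (Dᴴ * Q)ᴴ * (Dᴴ * Q) := by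
  rw [conjTranspose_mul, hQ.eq, conjTranspose_conjTranspose, Matrix.mul_assoc]

lemma trace_conjTranspose_mul_self_add_vecMulVec (A : Matrix m n R) (w : m → R) (t : n → R) :
    trace ((A + vecMulVec w (star t))ᴴ * (A + vecMulVec w (star t))) =
      trace (Aᴴ * A) + star (A *ᵥ t) ⬝ᵥ w + star w ⬝ᵥ (A *ᵥ t)
        + (star w ⬝ᵥ w) * (star t ⬝ᵥ t) := by
  have hcross : trace (Aᴴ * vecMulVec w (star t)) = star (A *ᵥ t) ⬝ᵥ w := by
    rw [mul_vecMulVec, trace_vecMulVec, dotProduct_comm, dotProduct_mulVec, star_mulVec]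
  have hcross' : trace ((vecMulVec w (star t))ᴴ * A) = star w ⬝ᵥ (A *ᵥ t) := by
    rw [← conjTranspose_conjTranspose A, ← conjTranspose_mul, trace_conjTranspose,
      conjTranspose_conjTranspose, hcross, star_dotProduct, star_star]
  have hsquare : trace ((vecMulVec w (star t))ᴴ * vecMulVec w (star t))
      = (star w ⬝ᵥ w) * (star t ⬝ᵥ t) := by
    rw [conjTranspose_vecMulVec, star_star, vecMulVec_mul_vecMulVec, trace_vecMulVec,
      dotProduct_smul, smul_eq_mul, dotProduct_comm t]
  rw [conjTranspose_add, Matrix.add_mul, Matrix.mul_add, Matrix.mul_add, trace_add, trace_add,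
    trace_add, hcross, hcross', hsquare]
  ring

lemma trace_conjTranspose_mul_self_sub_add_vecMulVec (A : Matrix m n R) {w : m → R}
    {t : n → R} {v : m → R} (hA : A *ᵥ t = (star t ⬝ᵥ t) • v) :
    trace (Aᴴ * A) - trace ((A + vecMulVec w (star t))ᴴ * (A + vecMulVec w (star t))) =
      (star t ⬝ᵥ t) * (star v ⬝ᵥ v - star (w + v) ⬝ᵥ (w + v)) := by
  have hreal : star (star t ⬝ᵥ t) = star t ⬝ᵥ t := by rw [← star_dotProduct_star, star_star]
  rw [trace_conjTranspose_mul_self_add_vecMulVec, hA, star_smul, hreal]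
  simp only [star_add, add_dotProduct, dotProduct_add, smul_dotProduct, dotProduct_smul,
    smul_eq_mul, dotProduct_comm (star w) v]
  ring

end RankOne

lemma dotProduct_star_self_smul_inv_smul_mulVec {K m n : Type*} [Field K] [PartialOrder K]
    [StarRing K] [StarOrderedRing K] [Fintype n] (M : Matrix m n K) (t : n → K) :
    (star t ⬝ᵥ t) • ((star t ⬝ᵥ t)⁻¹ • (M *ᵥ t)) = M *ᵥ t := by
  rcases eq_or_ne t 0 with rfl | ht
  · simp
  · exact smul_inv_smul₀ (dotProduct_star_self_eq_zero.not.mpr ht) _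

lemma sub_vecMulVec_mulVec_of_mulVec_eq_smul {m : Type*} [Fintype m] {Q : Matrix m m ℂ}
    (hQ : Q.IsHermitian) {x t : m → ℂ} {c : ℝ} (hc : c ≠ 0)
    (hc2 : (c : ℂ) ^ 2 = 1 + star x ⬝ᵥ Q *ᵥ x) (ht : Q *ᵥ x = (c : ℂ) • t) :
    (Q - vecMulVec t (star t)) *ᵥ x = (c : ℂ)⁻¹ • t := by
  have hdot : (c : ℂ) * (star t ⬝ᵥ x) = star x ⬝ᵥ Q *ᵥ x :=
    calc (c : ℂ) * (star t ⬝ᵥ x) = star ((c : ℂ) • t) ⬝ᵥ x := by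
          rw [star_smul, Complex.star_def, Complex.conj_ofReal, smul_dotProduct, smul_eq_mul]
      _ = star x ⬝ᵥ Q *ᵥ x := by rw [← ht, star_mulVec, hQ.eq, dotProduct_mulVec]
  rw [sub_mulVec, ht, vecMulVec_mulVec, op_smul_eq_smul, ← sub_smul]
  congr 1
  have hc' : (c : ℂ) ≠ 0 := by exact_mod_cast hc
  field_simp
  linear_combination hc2 - hdot

lemma posSemidef_inv_mul_conjTranspose_add_sq_smul_one {m n : Type*} [Fintype m]
    [DecidableEq m] [Fintype n] (X : Matrix m n ℂ) (σ : ℝ) :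
    (X * Xᴴ + ((σ : ℂ) ^ 2) • 1)⁻¹.PosSemidef := by
  have hσ2 : (0 : ℂ) ≤ (σ : ℂ) ^ 2 := by
    rw [← Complex.ofReal_pow]; exact_mod_cast sq_nonneg σ
  exact ((posSemidef_self_mul_conjTranspose X).add (PosSemidef.one.smul hσ2)).inv

theorem delta_mismatch_term_general
    (N L : ℕ) (σ : ℝ)
    (Xhat : Matrix (Fin N) (Fin L) ℂ)
    (xh xt : Fin N → ℂ)
    (Q D Q₁ D₁ : Matrix (Fin N) (Fin N) ℂ)
    (hQ : Q = (Xhat * Xhatᴴ + ((σ : ℂ) ^ 2) • 1)⁻¹)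
    (α : ℝ) (hα : (α : ℂ) = star xh ⬝ᵥ Q *ᵥ xh)
    (t : Fin N → ℂ) (ht : t = ((Real.sqrt (1 + α) : ℝ) : ℂ)⁻¹ • (Q *ᵥ xh))
    (hQ₁ : Q₁ = Q - vecMulVec t (star t))
    (hD₁ : D₁ = D + vecMulVec xh (star (xh - xt)))
    (e u v : Fin N → ℂ)
    (he : e = ((Real.sqrt (1 + α) : ℝ) : ℂ)⁻¹ • (xh - xt))
    (hu : u = Dᴴ *ᵥ t)
    (hv : v = ((nsq t : ℝ) : ℂ)⁻¹ • (Dᴴ *ᵥ (Q *ᵥ t))) :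
    Matrix.trace (Q * D * Dᴴ * Q) - Matrix.trace (Q₁ * D₁ * D₁ᴴ * Q₁)
      = ((nsq t * (nsq v - nsq (e - u + v)) : ℝ) : ℂ) := by
  have hQpsd : Q.PosSemidef := hQ ▸ posSemidef_inv_mul_conjTranspose_add_sq_smul_one Xhat σ
  have hα0 : 0 ≤ α := by
    have := hQpsd.dotProduct_mulVec_nonneg xh
    rw [← hα] at this
    exact_mod_cast this
  set c := √(1 + α)
  have hc : c ≠ 0 := (Real.sqrt_pos.mpr (by linarith)).ne'
  have hc2 : (c : ℂ) ^ 2 = 1 + star xh ⬝ᵥ Q *ᵥ xh := by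
    rw [← hα]; exact_mod_cast Real.sq_sqrt (by linarith)
  have hQx : Q *ᵥ xh = (c : ℂ) • t := by
    rw [ht, smul_inv_smul₀ (by exact_mod_cast hc)]
  have hQ₁H : Q₁.IsHermitian :=
    hQ₁ ▸ hQpsd.isHermitian.sub (posSemidef_vecMulVec_self_star t).isHermitian
  have hQ₁x : Q₁ *ᵥ xh = (c : ℂ)⁻¹ • t :=
    hQ₁ ▸ sub_vecMulVec_mulVec_of_mulVec_eq_smul hQpsd.isHermitian hc hc2 hQx
  have hfactor : D₁ᴴ * Q₁ = Dᴴ * Q + vecMulVec (e - u) (star t) := by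
    rw [hD₁, conjTranspose_add_vecMulVec_mul hQ₁H, hQ₁x, star_smul, star_inv₀, Complex.star_def,
      Complex.conj_ofReal, vecMulVec_smul, ← smul_vecMulVec, ← he, hQ₁, Matrix.mul_sub,
      mul_vecMulVec, ← hu, sub_vecMulVec]
    abel
  have hDQt : (Dᴴ * Q) *ᵥ t = (star t ⬝ᵥ t) • v := by
    rw [hv, ofReal_nsq, mulVec_mulVec, dotProduct_star_self_smul_inv_smul_mulVec]
  rw [mul_mul_conjTranspose_mul_of_isHermitian hQpsd.isHermitian,
    mul_mul_conjTranspose_mul_of_isHermitian hQ₁H, hfactor,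
    trace_conjTranspose_mul_self_sub_add_vecMulVec _ hDQt]
  push_cast
  rw [ofReal_nsq, ofReal_nsq, ofReal_nsq]

/-- in the Δ-setup, the difference of the training-mismatch trace
terms satisfies `Tr[Q D Dᴴ Q] − Tr[Q₁ D₁ D₁ᴴ Q₁] = ‖t‖²(‖v‖² − ‖e − u + v‖²)`. -/
theorem delta_mismatch_term
    (N L : ℕ) (σ : ℝ) (hσ : 0 < σ)
    (Xhat X : Matrix (Fin N) (Fin L) ℂ)
    (xh xt : Fin N → ℂ) (hxh : xh ≠ 0)
    (Q D Q₁ D₁ : Matrix (Fin N) (Fin N) ℂ)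
    (hQ : Q = (Xhat * Xhatᴴ + ((σ : ℂ) ^ 2) • 1)⁻¹)
    (hD : D = Xhat * (Xhat - X)ᴴ + ((σ : ℂ) ^ 2) • 1)
    (α : ℝ) (hα : (α : ℂ) = star xh ⬝ᵥ Q *ᵥ xh)
    (t : Fin N → ℂ) (ht : t = ((Real.sqrt (1 + α) : ℝ) : ℂ)⁻¹ • (Q *ᵥ xh))
    (hQ₁ : Q₁ = Q - vecMulVec t (star t))
    (hD₁ : D₁ = D + vecMulVec xh (star (xh - xt)))
    (e u v : Fin N → ℂ)
    (he : e = ((Real.sqrt (1 + α) : ℝ) : ℂ)⁻¹ • (xh - xt))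
    (hu : u = Dᴴ *ᵥ t)
    (hv : v = ((nsq t : ℝ) : ℂ)⁻¹ • (Dᴴ *ᵥ (Q *ᵥ t))) :
    Matrix.trace (Q * D * Dᴴ * Q) - Matrix.trace (Q₁ * D₁ * D₁ᴴ * Q₁)
      = ((nsq t * (nsq v - nsq (e - u + v)) : ℝ) : ℂ) :=
  delta_mismatch_term_general N L σ Xhat xh xt Q D Q₁ D₁ hQ α hα t ht hQ₁ hD₁ e u v he hu hv
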